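/- Let f be a ternary cubic with real coefficients and suppose c ∈ ℝ satisfies (1/2)·Σ_{p,q=1}^{3} B_{pq}·∂²B_{ij}/∂x_p∂x_q = c·x_i·x_j for all i, j. Let x ∈ ℝ³ be a point at which H(x) ≠ 0, and set g_{ij} = −f_{ij}(x)/6, h = det(g_{ij}), let (g^{pq}) be the inverse matrix of (g_{ij}), and define R_{ijkl} = −(1/144)·Σ_{p,q=1}^{3} g^{pq}·(f_{jlp} f_{ikq} − f_{ilp} f_{jkq}), where f_{ijk} = ∂³f/∂x_i∂x_j∂x_k are the (constant) third partials of f. Then −4h·R_{1212} = 6^{−4}·c·x₃² and 4h·R_{1323} = 6^{−4}·c·x₁·x₂. -/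

import Mathlib

open MvPolynomial

noncomputable section

/-- The Hessian matrix of second partial derivatives of `f`. -/
def hessian (f : MvPolynomial (Fin 3) ℝ) : Matrix (Fin 3) (Fin 3) (MvPolynomial (Fin 3) ℝ) :=
  fun i j => pderiv i (pderiv j f)

/-- The adjugate (cofactor) matrix of the Hessian matrix of `f`. -/
def Bmat (f : MvPolynomial (Fin 3) ℝ) : Matrix (Fin 3) (Fin 3) (MvPolynomial (Fin 3) ℝ) :=
  (hessian f).adjugate

/-- The matrix `g_{ij} = -f_{ij}(x)/6` of the Hessian pseudo-Riemannian metric at `x`. -/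
def gmat (f : MvPolynomial (Fin 3) ℝ) (x : Fin 3 → ℝ) : Matrix (Fin 3) (Fin 3) ℝ :=
  fun i j => -(eval x (pderiv i (pderiv j f))) / 6

/-- The (constant) third partial derivatives `f_{ijk}` of `f`. -/
def thirdPartial (f : MvPolynomial (Fin 3) ℝ) (x : Fin 3 → ℝ) (i j k : Fin 3) : ℝ :=
  eval x (pderiv i (pderiv j (pderiv k f)))

/-- The components `R_{ijkl}` of the curvature tensor of the Hessian metric (Totaro's
formula): `R_{ijkl} = -(1/144) ∑_{p,q} g^{pq} (f_{jlp} f_{ikq} - f_{ilp} f_{jkq})`. -/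
def curv (f : MvPolynomial (Fin 3) ℝ) (x : Fin 3 → ℝ) (i j k l : Fin 3) : ℝ :=
  -(1/144) * ∑ p : Fin 3, ∑ q : Fin 3,
    (gmat f x)⁻¹ p q *
      (thirdPartial f x j l p * thirdPartial f x i k q -
        thirdPartial f x i l p * thirdPartial f x j k q)

/-! Since `f` is cubic, the entries of its Hessian `A` are linear forms, so the second partials
`∂_p ∂_q` of a `2 × 2` minor `A_{ik} A_{jl} - A_{il} A_{jk}` are the constants
`f_{ikq} f_{jlp} + f_{ikp} f_{jlq} - f_{ilq} f_{jkp} - f_{ilp} f_{jkq}`. Contracted against the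
symmetric matrix `B` they give `2 ∑ B_{pq} (f_{jlp} f_{ikq} - f_{ilp} f_{jkq})`. On the other
side, `h g^{pq}` is the adjugate of `g = -A/6`, that is `B/36`, so `h R_{ijkl}` is the same
contraction times `-1/(144 · 36)`. Finally `B₃₃` and `B₁₂` are, up to sign, the minors for
`(i,j,k,l) = (1,2,1,2)` and `(1,3,2,3)`. -/

namespace MvPolynomial

variable {R σ : Type*} [CommSemiring R]

theorem pderiv_pderiv_comm [DecidableEq σ] (i j : σ) (p : MvPolynomial σ R) :
    pderiv i (pderiv j p) = pderiv j (pderiv i p) := by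
  induction p using MvPolynomial.induction_on with
  | C a => simp only [pderiv_C, map_zero]
  | add p q hp hq => simp only [map_add, hp, hq]
  | mul_X p n ih =>
    simp only [pderiv_mul, map_add, ih, pderiv_X, Pi.single_apply]
    split_ifs <;> simp only [mul_one, mul_zero, map_zero, add_zero, Derivation.map_one_eq_zero]
    ring

theorem IsHomogeneous.pderiv_eq_zero {p : MvPolynomial σ R} (hp : p.IsHomogeneous 0) (i : σ) :
    pderiv i p = 0 := by
  rw [← totalDegree_zero_iff_isHomogeneous, totalDegree_eq_zero_iff_eq_C] at hp
  rw [hp, pderiv_C]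

theorem pderiv_pderiv_mul_of_pderiv_pderiv_eq_zero {u v : MvPolynomial σ R} {p q : σ}
    (hu : pderiv p (pderiv q u) = 0) (hv : pderiv p (pderiv q v) = 0) :
    pderiv p (pderiv q (u * v)) = pderiv q u * pderiv p v + pderiv p u * pderiv q v := by
  simp only [pderiv_mul, map_add, hu, hv, zero_mul, mul_zero, zero_add, add_zero]

end MvPolynomial

theorem hessian_comm (f : MvPolynomial (Fin 3) ℝ) (i j : Fin 3) :
    hessian f i j = hessian f j i :=
  pderiv_pderiv_comm i j f

theorem Bmat_comm (f : MvPolynomial (Fin 3) ℝ) (i j : Fin 3) : Bmat f i j = Bmat f j i := by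
  have hsymm : (hessian f).transpose = hessian f := Matrix.ext fun i j => hessian_comm f j i
  rw [Bmat, ← Matrix.transpose_apply (hessian f).adjugate, Matrix.adjugate_transpose, hsymm]

theorem Bmat_two_two (f : MvPolynomial (Fin 3) ℝ) :
    Bmat f 2 2 = hessian f 0 0 * hessian f 1 1 - hessian f 0 1 * hessian f 1 0 := by
  simp [Bmat, Matrix.adjugate_fin_three]

theorem Bmat_zero_one (f : MvPolynomial (Fin 3) ℝ) :
    Bmat f 0 1 = hessian f 0 2 * hessian f 2 1 - hessian f 0 1 * hessian f 2 2 := by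
  simp only [Bmat, Matrix.adjugate_fin_three, Matrix.of_apply, Matrix.cons_val',
    Matrix.cons_val_one, Matrix.cons_val_zero, Matrix.cons_val_fin_one]
  ring

theorem pderiv_pderiv_hessian_eq_zero {f : MvPolynomial (Fin 3) ℝ} (hf : f.IsHomogeneous 3)
    (p q i j : Fin 3) :
    pderiv p (pderiv q (hessian f i j)) = 0 :=
  IsHomogeneous.pderiv_eq_zero hf.pderiv.pderiv.pderiv p

theorem eval_pderiv_hessian (f : MvPolynomial (Fin 3) ℝ) (x : Fin 3 → ℝ) (p i j : Fin 3) :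
    eval x (pderiv p (hessian f i j)) = thirdPartial f x i j p := by
  rw [hessian, thirdPartial, pderiv_pderiv_comm p i, pderiv_pderiv_comm p j]

theorem eval_sum_Bmat_mul_pderiv_pderiv_minor {f : MvPolynomial (Fin 3) ℝ} (hf : f.IsHomogeneous 3)
    (x : Fin 3 → ℝ) (i j k l : Fin 3) :
    eval x (∑ p : Fin 3, ∑ q : Fin 3, Bmat f p q *
        pderiv p (pderiv q (hessian f i k * hessian f j l - hessian f i l * hessian f j k))) =
      2 * ∑ p : Fin 3, ∑ q : Fin 3, eval x (Bmat f p q) *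
        (thirdPartial f x j l p * thirdPartial f x i k q -
          thirdPartial f x i l p * thirdPartial f x j k q) := by
  set T := thirdPartial f x
  set X : Fin 3 → Fin 3 → ℝ := fun p q => T j l p * T i k q - T i l p * T j k q
  have hswap : ∑ p : Fin 3, ∑ q : Fin 3, eval x (Bmat f p q) * X q p =
      ∑ p : Fin 3, ∑ q : Fin 3, eval x (Bmat f p q) * X p q := by
    rw [Finset.sum_comm]
    simp_rw [Bmat_comm f _ _]
  calc _ = ∑ p : Fin 3, ∑ q : Fin 3, eval x (Bmat f p q) * (X p q + X q p) := by
        simp only [map_sum, map_mul, map_sub,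
          pderiv_pderiv_mul_of_pderiv_pderiv_eq_zero (pderiv_pderiv_hessian_eq_zero hf _ _ _ _)
            (pderiv_pderiv_hessian_eq_zero hf _ _ _ _), map_add, eval_pderiv_hessian, X, T]
        refine Finset.sum_congr rfl fun p _ => Finset.sum_congr rfl fun q _ => ?_
        ring
    _ = _ := by
        simp only [mul_add, Finset.sum_add_distrib, hswap]
        ring

theorem gmat_eq_smul_map_eval (f : MvPolynomial (Fin 3) ℝ) (x : Fin 3 → ℝ) :
    gmat f x = (-6⁻¹ : ℝ) • (eval x).mapMatrix (hessian f) := by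
  ext i j
  simp only [gmat, hessian, RingHom.mapMatrix_apply, Matrix.smul_apply, Matrix.map_apply,
    smul_eq_mul]
  ring

theorem det_gmat (f : MvPolynomial (Fin 3) ℝ) (x : Fin 3 → ℝ) :
    (gmat f x).det = -(6 ^ 3)⁻¹ * eval x (hessian f).det := by
  rw [gmat_eq_smul_map_eval, Matrix.det_smul, ← RingHom.map_det, Fintype.card_fin]
  ring

theorem adjugate_gmat (f : MvPolynomial (Fin 3) ℝ) (x : Fin 3 → ℝ) :
    (gmat f x).adjugate = (6 ^ 2 : ℝ)⁻¹ • (eval x).mapMatrix (Bmat f) := by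
  rw [gmat_eq_smul_map_eval, Matrix.adjugate_smul, Bmat, RingHom.map_adjugate, Fintype.card_fin]
  norm_num

theorem det_gmat_mul_curv {f : MvPolynomial (Fin 3) ℝ} {x : Fin 3 → ℝ} (hx : (gmat f x).det ≠ 0)
    (i j k l : Fin 3) :
    (gmat f x).det * curv f x i j k l =
      -(6 ^ 4 * 4)⁻¹ * ∑ p : Fin 3, ∑ q : Fin 3, eval x (Bmat f p q) *
        (thirdPartial f x j l p * thirdPartial f x i k q -
          thirdPartial f x i l p * thirdPartial f x j k q) := by
  have hinv :
      (gmat f x).det • (gmat f x)⁻¹ = (6 ^ 2 : ℝ)⁻¹ • (eval x).mapMatrix (Bmat f) := by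
    rw [Matrix.inv_def, Ring.inverse_eq_inv', smul_smul, mul_inv_cancel₀ hx, one_smul,
      adjugate_gmat]
  have hentry (p q : Fin 3) :
      (gmat f x).det * (gmat f x)⁻¹ p q = (6 ^ 2 : ℝ)⁻¹ * eval x (Bmat f p q) :=
    congr_fun₂ hinv p q
  calc (gmat f x).det * curv f x i j k l
      = -(1 / 144) * ∑ p : Fin 3, ∑ q : Fin 3, ((gmat f x).det * (gmat f x)⁻¹ p q) *
          (thirdPartial f x j l p * thirdPartial f x i k q -
            thirdPartial f x i l p * thirdPartial f x j k q) := by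
        simp only [curv, Finset.mul_sum, mul_assoc, mul_left_comm (gmat f x).det]
    _ = _ := by
        simp only [hentry, mul_assoc, ← Finset.mul_sum]
        ring

theorem neg_four_mul_det_gmat_mul_curv {f : MvPolynomial (Fin 3) ℝ} (hf : f.IsHomogeneous 3)
    {x : Fin 3 → ℝ} (hx : eval x (hessian f).det ≠ 0) (i j k l : Fin 3) :
    -4 * (gmat f x).det * curv f x i j k l =
      (6 ^ 4)⁻¹ * eval x (C (1 / 2 : ℝ) * ∑ p : Fin 3, ∑ q : Fin 3, Bmat f p q *
        pderiv p (pderiv q (hessian f i k * hessian f j l - hessian f i l * hessian f j k))) := by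
  have hdet : (gmat f x).det ≠ 0 := by
    rw [det_gmat]
    exact mul_ne_zero (by norm_num) hx
  rw [mul_assoc, det_gmat_mul_curv hdet, eval_mul, eval_C,
    eval_sum_Bmat_mul_pderiv_pderiv_minor hf]
  ring

/-- If `(1/2) ∑_{p,q} B_{pq} ∂²B_{ij}/∂x_p∂x_q = c x_i x_j` for all `i, j`, and `x` is a
point where the Hessian determinant does not vanish, then, with `h = det (g_{ij})`,
`-4h R₁₂₁₂ = 6⁻⁴ c x₃²` and `4h R₁₃₂₃ = 6⁻⁴ c x₁ x₂`. -/
theorem stmt3 (f : MvPolynomial (Fin 3) ℝ) (hf : f.IsHomogeneous 3) (c : ℝ)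
    (hc : ∀ i j : Fin 3,
      C (1/2 : ℝ) * ∑ p : Fin 3, ∑ q : Fin 3,
          Bmat f p q * pderiv p (pderiv q (Bmat f i j)) =
        C c * X i * X j)
    (x : Fin 3 → ℝ) (hx : eval x (hessian f).det ≠ 0) :
    -4 * (gmat f x).det * curv f x 0 1 0 1 = ((6 : ℝ) ^ 4)⁻¹ * c * (x 2) ^ 2 ∧
    4 * (gmat f x).det * curv f x 0 2 1 2 = ((6 : ℝ) ^ 4)⁻¹ * c * (x 0 * x 1) := by
  constructor
  · rw [neg_four_mul_det_gmat_mul_curv hf hx, ← Bmat_two_two, hc]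
    simp only [eval_mul, eval_C, eval_X]
    ring
  · rw [← neg_neg (4 : ℝ), neg_mul, neg_mul, neg_four_mul_det_gmat_mul_curv hf hx,
      ← neg_sub, ← Bmat_zero_one]
    simp only [map_neg, mul_neg, Finset.sum_neg_distrib, hc, eval_mul, eval_C, eval_X]
    ring
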